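/- arXiv:2002.05929 — 9 statements merged into one kernel-verified Lean document; each statement's English description precedes it below -/
import Mathlib

section
/- (Proposition 1) Suppose M > 0, c > 0, α1 > α2 > 0, and α3 > 0, and let q(n) = α1 − α2·exp(−α3·n). Then the standalone profit function F(p_s, n) = M·p_s·(1 − p_s/q(n)) − n·c is concave on the convex set ℝ × [0, ∞): at every point (p_s, n) with n ≥ 0, its Hessian matrix H, with entries H₁₁ = −2M/q(n), H₁₂ = H₂₁ = 2M·α2·α3·p_s·exp(−α3·n)/q(n)², and H₂₂ = −2M·α2²·α3²·p_s²·exp(−2α3·n)/q(n)³ − M·α2·α3²·p_s²·exp(−α3·n)/q(n)², is negative semidefinite. -/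
open Real Set

/-!
Write `F (p, n) = M p - M p² / q n - c n`. The map `(p, t) ↦ p² / t` is jointly convex on
`t > 0` (the perspective of `p ↦ p²`) and decreasing in `t`, while `q` is concave and positive
on `n ≥ 0`; composing, `F` is concave. The Hessian claim is the `2 × 2` criterion
`H₁₁ ≤ 0`, `H₂₂ ≤ 0`, `det H = 2 M² α₂ α₃² p² e^{-α₃ n} / q³ ≥ 0`.
-/

lemma posSemidef_neg_fin_two {a b d : ℝ} (ha : a ≤ 0) (hd : d ≤ 0) (hdet : b ^ 2 ≤ a * d) :
    (-!![a, b; b, d]).PosSemidef := by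
  refine .of_dotProduct_mulVec_nonneg ?_ fun x => ?_
  · ext i j
    fin_cases i <;> fin_cases j <;> simp
  · have hform : dotProduct (star x) ((-!![a, b; b, d]).mulVec x)
        = -(a * x 0 ^ 2 + 2 * b * x 0 * x 1 + d * x 1 ^ 2) := by
      simp [dotProduct, Matrix.mulVec, Fin.sum_univ_two]
      ring
    rw [hform]
    rcases ha.lt_or_eq with ha | rfl
    · -- completing the square: `a Q = (a x₀ + b x₁)² + (a d - b²) x₁²`
      nlinarith [sq_nonneg (a * x 0 + b * x 1), mul_nonneg (sub_nonneg.2 hdet) (sq_nonneg (x 1))]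
    · have hb : b = 0 := by nlinarith [sq_nonneg b]
      subst hb
      nlinarith [sq_nonneg (x 1)]

lemma convexOn_sq_div : ConvexOn ℝ (univ ×ˢ Ioi 0) (fun x : ℝ × ℝ => x.1 ^ 2 / x.2) := by
  refine ⟨convex_univ.prod (convex_Ioi 0), ?_⟩
  rintro ⟨p₁, t₁⟩ ⟨-, ht₁ : 0 < t₁⟩ ⟨p₂, t₂⟩ ⟨-, ht₂ : 0 < t₂⟩ a b ha hb hab
  have ht : 0 < a * t₁ + b * t₂ := convex_Ioi (0 : ℝ) ht₁ ht₂ ha hb hab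
  simp only [Prod.smul_mk, Prod.mk_add_mk, smul_eq_mul]
  have key : (a * (p₁ ^ 2 / t₁) + b * (p₂ ^ 2 / t₂)) * (a * t₁ + b * t₂) - (a * p₁ + b * p₂) ^ 2
      = a * b * (p₁ * t₂ - p₂ * t₁) ^ 2 / (t₁ * t₂) := by
    field_simp
    ring
  rw [div_le_iff₀ ht, ← sub_nonneg, key]
  positivity

lemma concaveOn_quality {α1 α2 : ℝ} (α3 : ℝ) (hα2 : 0 ≤ α2) :
    ConcaveOn ℝ univ (fun n : ℝ => α1 - α2 * exp (-α3 * n)) := by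
  refine ⟨convex_univ, fun x _ y _ a b ha hb hab => ?_⟩
  have h := convexOn_exp.2 (mem_univ (-α3 * x)) (mem_univ (-α3 * y)) ha hb hab
  simp only [smul_eq_mul] at h ⊢
  have hcomb : a * (-α3 * x) + b * (-α3 * y) = -α3 * (a * x + b * y) := by ring
  rw [hcomb] at h
  linear_combination α2 * h + α1 * hab

lemma quality_pos {α1 α2 α3 n : ℝ} (hα12 : α2 < α1) (hα2 : 0 ≤ α2) (hα3 : 0 ≤ α3) (hn : 0 ≤ n) :
    0 < α1 - α2 * exp (-α3 * n) := by
  have : exp (-α3 * n) ≤ 1 := exp_le_one_iff.2 (by nlinarith)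
  nlinarith

lemma concaveOn_revenue {M : ℝ} {s : Set ℝ} {q : ℝ → ℝ} (hM : 0 ≤ M) (hq : ConcaveOn ℝ s q)
    (hq_pos : ∀ n ∈ s, 0 < q n) :
    ConcaveOn ℝ (univ ×ˢ s) (fun x : ℝ × ℝ => M * x.1 * (1 - x.1 / q x.2)) := by
  refine ⟨convex_univ.prod hq.1, ?_⟩
  rintro ⟨p₁, n₁⟩ ⟨-, hn₁ : n₁ ∈ s⟩ ⟨p₂, n₂⟩ ⟨-, hn₂ : n₂ ∈ s⟩ a b ha hb hab
  have hq₁ := hq_pos n₁ hn₁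
  have hq₂ := hq_pos n₂ hn₂
  have hT : a * q n₁ + b * q n₂ ≤ q (a * n₁ + b * n₂) := hq.2 hn₁ hn₂ ha hb hab
  have hT₀ : 0 < a * q n₁ + b * q n₂ := convex_Ioi (0 : ℝ) hq₁ hq₂ ha hb hab
  have hsq := convexOn_sq_div.2 (x := (p₁, q n₁)) (y := (p₂, q n₂)) ⟨mem_univ _, hq₁⟩
    ⟨mem_univ _, hq₂⟩ ha hb hab
  simp only [Prod.smul_mk, Prod.mk_add_mk, smul_eq_mul] at hsq ⊢
  have key := (div_le_div_of_nonneg_left (sq_nonneg (a * p₁ + b * p₂)) hT₀ hT).trans hsq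
  have hsplit : ∀ p t : ℝ, M * p * (1 - p / t) = M * p - M * (p ^ 2 / t) := fun p t => by ring
  simp only [hsplit]
  linear_combination M * key

lemma profit_hessian_negSemidef {M α2 α3 p e q : ℝ} (hM : 0 ≤ M) (hα2 : 0 ≤ α2) (he : 0 ≤ e)
    (hq : 0 < q) :
    (-!![-2 * M / q, 2 * M * α2 * α3 * p * e / q ^ 2;
        2 * M * α2 * α3 * p * e / q ^ 2,
        -2 * M * α2 ^ 2 * α3 ^ 2 * p ^ 2 * e ^ 2 / q ^ 3
        - M * α2 * α3 ^ 2 * p ^ 2 * e / q ^ 2] : Matrix (Fin 2) (Fin 2) ℝ).PosSemidef := by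
  apply posSemidef_neg_fin_two
  · rw [neg_mul, neg_div, neg_nonpos]
    positivity
  · have h : -2 * M * α2 ^ 2 * α3 ^ 2 * p ^ 2 * e ^ 2 / q ^ 3 - M * α2 * α3 ^ 2 * p ^ 2 * e / q ^ 2
        = -(2 * M * α2 ^ 2 * α3 ^ 2 * p ^ 2 * e ^ 2 / q ^ 3
          + M * α2 * α3 ^ 2 * p ^ 2 * e / q ^ 2) := by
      ring
    rw [h, neg_nonpos]
    positivity
  · have hdet : -2 * M / q * (-2 * M * α2 ^ 2 * α3 ^ 2 * p ^ 2 * e ^ 2 / q ^ 3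
          - M * α2 * α3 ^ 2 * p ^ 2 * e / q ^ 2) - (2 * M * α2 * α3 * p * e / q ^ 2) ^ 2
        = 2 * M ^ 2 * α2 * α3 ^ 2 * p ^ 2 * e / q ^ 3 := by
      field_simp
      ring
    rw [← sub_nonneg, hdet]
    positivity

theorem standalone_profit_concave_general (M c α1 α2 α3 : ℝ) (hM : 0 < M)
    (hα12 : α2 < α1) (hα2 : 0 < α2) (hα3 : 0 < α3) :
    (∀ p_s n : ℝ, 0 ≤ n →
      Matrix.PosSemidef
        (-!![-2 * M / (α1 - α2 * Real.exp (-α3 * n)),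
            2 * M * α2 * α3 * p_s * Real.exp (-α3 * n) /
              (α1 - α2 * Real.exp (-α3 * n)) ^ 2;
            2 * M * α2 * α3 * p_s * Real.exp (-α3 * n) /
              (α1 - α2 * Real.exp (-α3 * n)) ^ 2,
            -2 * M * α2 ^ 2 * α3 ^ 2 * p_s ^ 2 * Real.exp (-2 * α3 * n) /
              (α1 - α2 * Real.exp (-α3 * n)) ^ 3
            - M * α2 * α3 ^ 2 * p_s ^ 2 * Real.exp (-α3 * n) /
              (α1 - α2 * Real.exp (-α3 * n)) ^ 2] : Matrix (Fin 2) (Fin 2) ℝ)) ∧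
    ConcaveOn ℝ (Set.univ ×ˢ Set.Ici (0 : ℝ))
      (fun x : ℝ × ℝ =>
        M * x.1 * (1 - x.1 / (α1 - α2 * Real.exp (-α3 * x.2))) - x.2 * c) := by
  have hq : ∀ n ∈ Ici (0 : ℝ), 0 < α1 - α2 * exp (-α3 * n) :=
    fun _ hn => quality_pos hα12 hα2.le hα3.le hn
  refine ⟨fun p n hn => ?_, ?_⟩
  · have hexp : exp (-2 * α3 * n) = exp (-α3 * n) ^ 2 := by
      rw [sq, ← exp_add]
      ring_nf
    rw [hexp]
    exact profit_hessian_negSemidef hM.le hα2.le (exp_pos _).le (hq n hn)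
  · have hcost : ConvexOn ℝ (univ ×ˢ Ici 0) (fun x : ℝ × ℝ => x.2 * c) :=
      (LinearMap.snd ℝ ℝ ℝ).smulRight c |>.convexOn (convex_univ.prod (convex_Ici 0))
    exact (concaveOn_revenue hM.le ((concaveOn_quality α3 hα2.le).subset (subset_univ _)
      (convex_Ici 0)) hq).sub hcost

/-- Proposition 1: With `M > 0`, `c > 0`, `α1 > α2 > 0`, `α3 > 0` and
`q n = α1 - α2 * exp (-α3 * n)`, the standalone profit function
`F (p_s, n) = M * p_s * (1 - p_s / q n) - n * c` is concave on `ℝ × [0, ∞)`: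
at every point `(p_s, n)` with `n ≥ 0`, its Hessian matrix (with the displayed
entries) is negative semidefinite. -/
theorem standalone_profit_concave (M c α1 α2 α3 : ℝ) (hM : 0 < M) (hc : 0 < c)
    (hα12 : α2 < α1) (hα2 : 0 < α2) (hα3 : 0 < α3) :
    (∀ p_s n : ℝ, 0 ≤ n →
      Matrix.PosSemidef
        (-!![-2 * M / (α1 - α2 * Real.exp (-α3 * n)),
            2 * M * α2 * α3 * p_s * Real.exp (-α3 * n) /
              (α1 - α2 * Real.exp (-α3 * n)) ^ 2;
            2 * M * α2 * α3 * p_s * Real.exp (-α3 * n) /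
              (α1 - α2 * Real.exp (-α3 * n)) ^ 2,
            -2 * M * α2 ^ 2 * α3 ^ 2 * p_s ^ 2 * Real.exp (-2 * α3 * n) /
              (α1 - α2 * Real.exp (-α3 * n)) ^ 3
            - M * α2 * α3 ^ 2 * p_s ^ 2 * Real.exp (-α3 * n) /
              (α1 - α2 * Real.exp (-α3 * n)) ^ 2] : Matrix (Fin 2) (Fin 2) ℝ)) ∧
    ConcaveOn ℝ (Set.univ ×ˢ Set.Ici (0 : ℝ))
      (fun x : ℝ × ℝ =>
        M * x.1 * (1 - x.1 / (α1 - α2 * Real.exp (-α3 * x.2))) - x.2 * c) :=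
  standalone_profit_concave_general M c α1 α2 α3 hM hα12 hα2 hα3
end

section
/- Suppose M > 0, c > 0, α1 > α2 > 0, α3 > 0, and M·α2·α3 > 4c. Let p_s* = (M·α1·α3 − 4c)/(2M·α3) and n* = (1/α3)·log(M·α2·α3/(4c)). Then (p_s*, n*) is a stationary point of the standalone profit function F(p_s, n) = M·p_s·(1 − p_s/q(n)) − n·c, i.e., both partial derivatives ∂F/∂p_s = M·(1 − 2p_s/q(n)) and ∂F/∂n = M·α2·α3·p_s²·exp(−α3·n)/q(n)² − c vanish at (p_s*, n*). -/
/-!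
At `n*` the exponential term is `exp (-α3 n*) = 4c / (M α2 α3)`, so the quality there is
`q n* = α1 - 4c / (M α3) = 2 p_s*`. This is exactly the first-order condition `p_s = q / 2` in the
price, and substituting `q = 2 p_s` into `∂F/∂n` leaves `M α2 α3 · exp (-α3 n*) / 4 - c = 0`.
-/

open Real Set

theorem hasDerivAt_sub_mul_exp_neg_mul (a b k n : ℝ) :
    HasDerivAt (fun n => a - b * exp (-k * n)) (b * k * exp (-k * n)) n := by
  have h := (((hasDerivAt_id n).const_mul (-k)).exp.const_mul b).const_sub a
  refine h.congr_deriv ?_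
  simp only [id]
  ring

theorem hasDerivAt_profit_price (M Q n c p : ℝ) :
    HasDerivAt (fun p => M * p * (1 - p / Q) - n * c) (M * (1 - 2 * p / Q)) p := by
  have h := (((hasDerivAt_id p).const_mul M).mul
    (((hasDerivAt_id p).div_const Q).const_sub 1)).sub_const (n * c)
  refine h.congr_deriv ?_
  simp only [id]
  ring

theorem HasDerivAt.profit_quantity {q : ℝ → ℝ} {q' n : ℝ} (hq : HasDerivAt q q' n)
    (hqn : q n ≠ 0) (M c p : ℝ) :
    HasDerivAt (fun n => M * p * (1 - p / q n) - n * c) (M * p ^ 2 * q' / q n ^ 2 - c) n := by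
  have h := ((((hasDerivAt_const n p).div hq hqn).const_sub 1).const_mul (M * p)).sub
    ((hasDerivAt_id n).mul_const c)
  refine h.congr_deriv ?_
  field_simp
  ring

theorem exp_neg_mul_one_div_mul_log {k x : ℝ} (hk : k ≠ 0) (hx : 0 < x) :
    exp (-k * (1 / k * log x)) = x⁻¹ := by
  rw [← exp_log (inv_pos.mpr hx), log_inv]
  congr 1
  field_simp

/-- Under `M > 0`, `c > 0`, `α1 > α2 > 0`, `α3 > 0` and
`M * α2 * α3 > 4 * c`, the point `(p_s*, n*)` with
`p_s* = (M * α1 * α3 - 4 * c) / (2 * M * α3)` and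
`n* = (1 / α3) * log (M * α2 * α3 / (4 * c))` is a stationary point of the
standalone profit `F (p_s, n) = M * p_s * (1 - p_s / q n) - n * c`,
where `q n = α1 - α2 * exp (-α3 * n)`: both partial derivatives
`∂F/∂p_s = M * (1 - 2 * p_s / q n)` and
`∂F/∂n = M * α2 * α3 * p_s ^ 2 * exp (-α3 * n) / (q n) ^ 2 - c` vanish there. -/
theorem standalone_stationary_point (M c α1 α2 α3 : ℝ) (hM : 0 < M) (hc : 0 < c)
    (hα12 : α2 < α1) (hα2 : 0 < α2) (hα3 : 0 < α3) (hcond : 4 * c < M * α2 * α3) :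
    let q : ℝ → ℝ := fun n => α1 - α2 * Real.exp (-α3 * n)
    let F : ℝ → ℝ → ℝ := fun p_s n => M * p_s * (1 - p_s / q n) - n * c
    let ps : ℝ := (M * α1 * α3 - 4 * c) / (2 * M * α3)
    let ns : ℝ := (1 / α3) * Real.log (M * α2 * α3 / (4 * c))
    (HasDerivAt (fun p => F p ns) (M * (1 - 2 * ps / q ns)) ps ∧
      M * (1 - 2 * ps / q ns) = 0) ∧
    (HasDerivAt (fun n => F ps n)
        (M * α2 * α3 * ps ^ 2 * Real.exp (-α3 * ns) / (q ns) ^ 2 - c) ns ∧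
      M * α2 * α3 * ps ^ 2 * Real.exp (-α3 * ns) / (q ns) ^ 2 - c = 0) := by
  intro q F ps ns
  have hexp : exp (-α3 * ns) = 4 * c / (M * α2 * α3) := by
    rw [exp_neg_mul_one_div_mul_log hα3.ne' (by positivity), inv_div]
  have hps : 0 < ps := div_pos (by nlinarith) (by positivity)
  have hq : q ns = 2 * ps := by
    simp only [q, hexp, ps]
    field_simp
  have hqn : q ns ≠ 0 := by rw [hq]; positivity
  refine ⟨⟨hasDerivAt_profit_price M (q ns) ns c ps, ?_⟩, ?_, ?_⟩
  · rw [hq, mul_div_mul_left _ _ two_ne_zero, div_self hps.ne', sub_self, mul_zero]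
  · convert (hasDerivAt_sub_mul_exp_neg_mul α1 α2 α3 ns).profit_quantity hqn M c ps using 1
    ring
  · rw [hexp, hq]
    field_simp
    ring
end

section
/- Suppose M > 0, c > 0, α1 > α2 > 0, α3 > 0, and M·α2·α3 > 4c. Let p_s* = (M·α1·α3 − 4c)/(2M·α3) and n* = (1/α3)·log(M·α2·α3/(4c)). Then (p_s*, n*) is a global maximizer of the standalone profit function over the feasible set: F(p_s*, n*) ≥ F(p_s, n) for all p_s ≥ 0 and n ≥ 0, where F(p_s, n) = M·p_s·(1 − p_s/q(n)) − n·c and q(n) = α1 − α2·exp(−α3·n). -/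
open Real

/-- Under `M > 0`, `c > 0`, `α1 > α2 > 0`, `α3 > 0` and
`M * α2 * α3 > 4 * c`, the point `(p_s*, n*)` is a global maximizer of the
standalone profit over the feasible set `{p_s ≥ 0, n ≥ 0}`. -/
theorem standalone_global_max (M c α1 α2 α3 : ℝ) (hM : 0 < M) (hc : 0 < c)
    (hα12 : α2 < α1) (hα2 : 0 < α2) (hα3 : 0 < α3) (hcond : 4 * c < M * α2 * α3) :
    let q : ℝ → ℝ := fun n => α1 - α2 * Real.exp (-α3 * n)
    let F : ℝ → ℝ → ℝ := fun p_s n => M * p_s * (1 - p_s / q n) - n * c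
    let ps : ℝ := (M * α1 * α3 - 4 * c) / (2 * M * α3)
    let ns : ℝ := (1 / α3) * Real.log (M * α2 * α3 / (4 * c))
    ∀ p_s n : ℝ, 0 ≤ p_s → 0 ≤ n → F p_s n ≤ F ps ns := by
  intro q F ps ns p n hp hn
  have hα1 : 0 < α1 := hα2.trans hα12
  have hK : (0:ℝ) < M * α2 * α3 / (4 * c) := by positivity
  have hexp_ns : Real.exp (-α3 * ns) = 4 * c / (M * α2 * α3) := by
    show Real.exp (-α3 * ((1/α3) * Real.log (M * α2 * α3 / (4 * c)))) = _
    have h1 : -α3 * ((1/α3) * Real.log (M * α2 * α3 / (4 * c)))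
        = -Real.log (M * α2 * α3 / (4 * c)) := by field_simp
    rw [h1, Real.exp_neg, Real.exp_log hK, inv_div]
  -- positivity of q on nonneg n
  have hqpos : ∀ m : ℝ, 0 ≤ m → 0 < q m := by
    intro m hm
    have h1 : Real.exp (-α3 * m) ≤ 1 := by
      apply Real.exp_le_one_iff.mpr
      nlinarith
    have : α2 * Real.exp (-α3 * m) ≤ α2 * 1 := by
      exact mul_le_mul_of_nonneg_left h1 hα2.le
    show 0 < α1 - α2 * Real.exp (-α3 * m)
    nlinarith
  have hqn : 0 < q n := hqpos n hn
  -- q ns value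
  have hqns : q ns = (M * α1 * α3 - 4 * c) / (M * α3) := by
    show α1 - α2 * Real.exp (-α3 * ns) = _
    rw [hexp_ns]
    field_simp
  have hqnspos : 0 < q ns := by
    rw [hqns]
    apply div_pos _ (by positivity)
    nlinarith
  -- Step 1: F p n ≤ M * q n / 4 - n * c
  have step1 : F p n ≤ M * q n / 4 - n * c := by
    show M * p * (1 - p / q n) - n * c ≤ _
    have e : M * p * (1 - p / q n) = (M * p * (q n - p)) / q n := by
      field_simp
    rw [e]
    have h2 : ∀ Q : ℝ, 0 < Q → (M * p * (Q - p)) / Q ≤ M * Q / 4 := by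
      intro Q hQ
      rw [div_le_iff₀ hQ]
      nlinarith [mul_nonneg hM.le (sq_nonneg (Q - 2 * p))]
    linarith [h2 (q n) hqn]
  -- Step 2: M * q n / 4 - n * c ≤ M * q ns / 4 - ns * c
  have hconv : Real.exp (-α3 * ns) * ((-α3 * n) - (-α3 * ns) + 1)
      ≤ Real.exp (-α3 * n) := by
    have h := Real.add_one_le_exp ((-α3 * n) - (-α3 * ns))
    have h2 := mul_le_mul_of_nonneg_left h (Real.exp_pos (-α3 * ns)).le
    calc Real.exp (-α3 * ns) * ((-α3 * n) - (-α3 * ns) + 1)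
        ≤ Real.exp (-α3 * ns) * Real.exp ((-α3 * n) - (-α3 * ns)) := h2
      _ = Real.exp (-α3 * n) := by rw [← Real.exp_add]; ring_nf
  have hts : Real.exp (-α3 * ns) * (M * α2 * α3) = 4 * c := by
    rw [hexp_ns]; field_simp
  have step2 : M * q n / 4 - n * c ≤ M * q ns / 4 - ns * c := by
    show M * (α1 - α2 * Real.exp (-α3 * n)) / 4 - n * c
        ≤ M * (α1 - α2 * Real.exp (-α3 * ns)) / 4 - ns * c
    have h3 := mul_le_mul_of_nonneg_left hconv (by positivity : (0:ℝ) ≤ M * α2 / 4)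
    have h4 : Real.exp (-α3 * ns) * (M * α2 * α3) * (ns - n) = 4 * c * (ns - n) := by
      rw [hts]
    nlinarith [h3, h4]
  -- Step 3: F ps ns = M * q ns / 4 - ns * c
  have hps : ps = q ns / 2 := by
    show (M * α1 * α3 - 4 * c) / (2 * M * α3) = _
    rw [hqns, div_div]; ring_nf
  have step3 : F ps ns = M * q ns / 4 - ns * c := by
    show M * ps * (1 - ps / q ns) - ns * c = _
    rw [hps]
    field_simp
    ring
  rw [step3]
  exact step1.trans step2
end

section
/- Suppose M > 0, c > 0, α1 > α2 > 0, α3 > 0, and M·α2·α3 > 4c. Then the maximum standalone profit admits the closed form F(p_s*, n*) = M·α1/4 − c/α3 − (c/α3)·log(M·α2·α3/(4c)), where F(p_s, n) = M·p_s·(1 − p_s/q(n)) − n·c, q(n) = α1 − α2·exp(−α3·n), p_s* = (M·α1·α3 − 4c)/(2M·α3), and n* = (1/α3)·log(M·α2·α3/(4c)). -/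
open Real

/-- Under `M > 0`, `c > 0`, `α1 > α2 > 0`, `α3 > 0` and
`M * α2 * α3 > 4 * c`, the maximum standalone profit admits the closed form
`F (p_s*, n*) = M * α1 / 4 - c / α3 - (c / α3) * log (M * α2 * α3 / (4 * c))`. -/
theorem standalone_max_profit_closed_form (M c α1 α2 α3 : ℝ) (hM : 0 < M) (hc : 0 < c)
    (hα12 : α2 < α1) (hα2 : 0 < α2) (hα3 : 0 < α3) (hcond : 4 * c < M * α2 * α3) :
    let q : ℝ → ℝ := fun n => α1 - α2 * Real.exp (-α3 * n)
    let F : ℝ → ℝ → ℝ := fun p_s n => M * p_s * (1 - p_s / q n) - n * c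
    let ps : ℝ := (M * α1 * α3 - 4 * c) / (2 * M * α3)
    let ns : ℝ := (1 / α3) * Real.log (M * α2 * α3 / (4 * c))
    F ps ns = M * α1 / 4 - c / α3 - (c / α3) * Real.log (M * α2 * α3 / (4 * c)) := by
  intro q F ps ns
  set L : ℝ := Real.log (M * α2 * α3 / (4 * c)) with hL
  have hpos : 0 < M * α2 * α3 / (4 * c) := by positivity
  have hexp : Real.exp (-α3 * ns) = 4 * c / (M * α2 * α3) := by
    have h1 : -α3 * ns = -L := by
      simp only [ns]
      field_simp
      rw [hL]
      ring
    rw [h1, Real.exp_neg, Real.exp_log hpos]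
    field_simp
  have hq : q ns = α1 - 4 * c / (M * α3) := by
    simp only [q, hexp]
    field_simp
  have hqne : q ns ≠ 0 := by
    rw [hq]
    have h2 : 4 * c / (M * α3) < α2 := by
      rw [div_lt_iff₀ (by positivity)]
      nlinarith
    nlinarith
  show M * ps * (1 - ps / q ns) - ns * c = M * α1 / 4 - c / α3 - (c / α3) * L
  have h3 : M * α1 * α3 - 4 * c ≠ 0 := by nlinarith
  have hq' : q ns = (M * α1 * α3 - 4 * c) / (M * α3) := by
    rw [hq]; field_simp
  rw [hq']
  simp only [ps, ns, ← hL]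
  have hdiv : (M * α1 * α3 - 4 * c) / (2 * M * α3) / ((M * α1 * α3 - 4 * c) / (M * α3))
      = 1 / 2 := by
    rw [div_div_div_eq]
    field_simp
  rw [hdiv]
  field_simp
  ring
end

section
/- Fix c > 0, α1 > α2 > 0, and α3 > 0. On the range of customer base sizes M > 4c/(α2·α3), the optimal requested data size n*(M) = (1/α3)·log(M·α2·α3/(4c)), the optimal subscription fee p_s*(M) = (M·α1·α3 − 4c)/(2M·α3), and the maximum profit F*(M) = M·α1/4 − c/α3 − (c/α3)·log(M·α2·α3/(4c)) are all strictly increasing functions of M. -/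
open Real Set

/-- Fix `c > 0`, `α1 > α2 > 0`, `α3 > 0`. On the range of customer
base sizes `M > 4 * c / (α2 * α3)`, the optimal requested data size
`n* M = (1 / α3) * log (M * α2 * α3 / (4 * c))`, the optimal subscription fee
`p_s* M = (M * α1 * α3 - 4 * c) / (2 * M * α3)`, and the maximum profit
`F* M = M * α1 / 4 - c / α3 - (c / α3) * log (M * α2 * α3 / (4 * c))` are all
strictly increasing functions of `M`. -/
theorem standalone_solutions_monotone_in_customers (c α1 α2 α3 : ℝ) (hc : 0 < c)
    (hα12 : α2 < α1) (hα2 : 0 < α2) (hα3 : 0 < α3) :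
    StrictMonoOn (fun M : ℝ => (1 / α3) * Real.log (M * α2 * α3 / (4 * c)))
      (Set.Ioi (4 * c / (α2 * α3))) ∧
    StrictMonoOn (fun M : ℝ => (M * α1 * α3 - 4 * c) / (2 * M * α3))
      (Set.Ioi (4 * c / (α2 * α3))) ∧
    StrictMonoOn
      (fun M : ℝ => M * α1 / 4 - c / α3 - (c / α3) * Real.log (M * α2 * α3 / (4 * c)))
      (Set.Ioi (4 * c / (α2 * α3))) := by
  have hth : 0 < 4 * c / (α2 * α3) := by positivity
  refine ⟨?_, ?_, ?_⟩ <;> intro a ha b hb hab <;>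
    simp only [Set.mem_Ioi] at ha hb <;>
    have hpa : 0 < a := lt_trans hth ha <;>
    have hpb : 0 < b := lt_trans hth hb
  · have h1 : a * α2 * α3 / (4 * c) < b * α2 * α3 / (4 * c) := by gcongr
    have h0 : 0 < a * α2 * α3 / (4 * c) := by positivity
    have := Real.log_lt_log h0 h1
    simp only
    have h3 : 0 < 1 / α3 := by positivity
    nlinarith
  · simp only
    rw [div_lt_div_iff₀ (by positivity) (by positivity)]
    nlinarith [mul_pos (mul_pos hc hα3) (sub_pos.mpr hab)]
  · -- a > 4c/(α2 α3) gives c/(α3 a) < α2/4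
    have key : c / α3 < α2 / 4 * a := by
      rw [div_lt_iff₀ hα3]
      have := (div_lt_iff₀ (by positivity : (0:ℝ) < α2 * α3)).mp ha
      nlinarith
    have hlog : Real.log (b * α2 * α3 / (4 * c)) - Real.log (a * α2 * α3 / (4 * c))
        < (b - a) / a := by
      have hba : (0:ℝ) < b / a := by positivity
      have hne : b / a ≠ 1 := by
        intro h
        have : b = a := by field_simp at h; linarith
        linarith
      have h2 := Real.log_lt_sub_one_of_pos hba hne
      have heq : Real.log (b * α2 * α3 / (4 * c)) - Real.log (a * α2 * α3 / (4 * c))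
          = Real.log (b / a) := by
        rw [← Real.log_div (by positivity) (by positivity)]
        congr 1
        field_simp
      rw [heq]
      have : b / a - 1 = (b - a) / a := by field_simp
      linarith [this ▸ h2]
    simp only
    have hca : 0 < c / α3 := by positivity
    have h4 : (c / α3) * ((b - a) / a) < α1 / 4 * (b - a) := by
      have hd : 0 < (b - a) / a := by
        have : 0 < b - a := sub_pos.mpr hab
        positivity
      have hm := mul_lt_mul_of_pos_right key hd
      have heq2 : α2 / 4 * a * ((b - a) / a) = α2 / 4 * (b - a) := by field_simp
      nlinarith
    nlinarith [mul_lt_mul_of_pos_left hlog hca]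
end

section
/- (Bundle demand, Case 1) Let q1, q2 > 0 and let (θ1, θ2) be uniformly distributed on the unit square [0, 1]². Then for every bundle subscription fee p with 0 ≤ p ≤ min(q1, q2), the probability that θ1·q1 + θ2·q2 ≥ p equals 1 − p²/(2·q1·q2). Equivalently, the two-dimensional Lebesgue measure of {(θ1, θ2) ∈ [0, 1]² : θ1·q1 + θ2·q2 ≥ p} equals 1 − p²/(2·q1·q2). -/
open Real Set MeasureTheory

/-- Bundle demand, Case 1: Let `q1, q2 > 0` and let `(θ1, θ2)` be
uniformly distributed on `[0, 1]²`. For every bundle fee `p` with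
`0 ≤ p ≤ min q1 q2`, the probability that `θ1 * q1 + θ2 * q2 ≥ p` equals
`1 - p ^ 2 / (2 * q1 * q2)`: the two-dimensional Lebesgue measure of
`{(θ1, θ2) ∈ [0, 1]² : θ1 * q1 + θ2 * q2 ≥ p}` equals `1 - p ^ 2 / (2 * q1 * q2)`. -/
theorem bundle_demand_case1 (q1 q2 p : ℝ) (hq1 : 0 < q1) (hq2 : 0 < q2)
    (hp0 : 0 ≤ p) (hp : p ≤ min q1 q2) :
    MeasureTheory.volume
        {θ : ℝ × ℝ | θ.1 ∈ Set.Icc (0 : ℝ) 1 ∧ θ.2 ∈ Set.Icc (0 : ℝ) 1 ∧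
          p ≤ θ.1 * q1 + θ.2 * q2}
      = ENNReal.ofReal (1 - p ^ 2 / (2 * q1 * q2)) := by
  have hpq1 : p ≤ q1 := hp.trans (min_le_left _ _)
  have hpq2 : p ≤ q2 := hp.trans (min_le_right _ _)
  set S := {θ : ℝ × ℝ | θ.1 ∈ Set.Icc (0 : ℝ) 1 ∧ θ.2 ∈ Set.Icc (0 : ℝ) 1 ∧
      p ≤ θ.1 * q1 + θ.2 * q2} with hS
  have hSeq : S = (Icc (0:ℝ) 1 ×ˢ Icc (0:ℝ) 1) ∩ {θ : ℝ × ℝ | p ≤ θ.1 * q1 + θ.2 * q2} := by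
    ext θ; simp only [hS, mem_setOf_eq, mem_inter_iff, mem_prod]; tauto
  have hmeas : MeasurableSet S := by
    rw [hSeq]
    exact (measurableSet_Icc.prod measurableSet_Icc).inter
      (measurableSet_le measurable_const
        ((measurable_fst.mul_const _).add (measurable_snd.mul_const _)))
  set f : ℝ → ℝ := fun x => max 0 ((p - x * q1) / q2) with hf
  set g : ℝ → ℝ := fun x => 1 - f x with hg
  have hfcont : Continuous f :=
    continuous_const.max
      ((continuous_const.sub (continuous_id.mul continuous_const)).div_const _)
  have hgcont : Continuous g := continuous_const.sub hfcont
  have hslice : ∀ x : ℝ, volume (Prod.mk x ⁻¹' S) =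
      (Icc (0:ℝ) 1).indicator (fun x => ENNReal.ofReal (g x)) x := by
    intro x
    by_cases hx : x ∈ Icc (0:ℝ) 1
    · rw [indicator_of_mem hx]
      have hset : Prod.mk x ⁻¹' S = Icc (max 0 ((p - x * q1) / q2)) 1 := by
        ext y
        simp only [hS, mem_preimage, mem_setOf_eq, mem_Icc, max_le_iff]
        constructor
        · rintro ⟨_, ⟨hy0, hy1⟩, hle⟩
          refine ⟨⟨hy0, ?_⟩, hy1⟩
          rw [div_le_iff₀ hq2]; linarith
        · rintro ⟨⟨hy0, hdiv⟩, hy1⟩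
          refine ⟨hx, ⟨hy0, hy1⟩, ?_⟩
          rw [div_le_iff₀ hq2] at hdiv; linarith
      rw [hset, Real.volume_Icc]
    · rw [indicator_of_notMem hx]
      have hset : Prod.mk x ⁻¹' S = ∅ := by
        ext y
        simp only [hS, mem_preimage, mem_setOf_eq, mem_empty_iff_false, iff_false]
        rintro ⟨h1, -, -⟩
        exact hx h1
      rw [hset]; simp
  have key : volume S = ∫⁻ x in Icc (0:ℝ) 1, ENNReal.ofReal (g x) := by
    rw [Measure.volume_eq_prod, Measure.prod_apply hmeas]
    simp_rw [hslice]
    rw [lintegral_indicator measurableSet_Icc]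
  rw [key]
  have hgnn : 0 ≤ᵐ[volume.restrict (Icc (0:ℝ) 1)] g := by
    filter_upwards [ae_restrict_mem measurableSet_Icc] with x hx
    have hx0 : 0 ≤ x := hx.1
    have hle1 : (p - x * q1) / q2 ≤ 1 := by
      rw [div_le_one hq2]; nlinarith
    have : f x ≤ 1 := max_le zero_le_one hle1
    simpa [hg, sub_nonneg] using this
  rw [← ofReal_integral_eq_lintegral_ofReal hgcont.integrableOn_Icc hgnn]
  congr 1
  rw [MeasureTheory.integral_Icc_eq_integral_Ioc,
    ← intervalIntegral.integral_of_le (by norm_num : (0:ℝ) ≤ 1)]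
  set a := p / q1 with ha
  have ha0 : 0 ≤ a := div_nonneg hp0 hq1.le
  have ha1 : a ≤ 1 := (div_le_one hq1).mpr hpq1
  have haq : a * q1 = p := div_mul_cancel₀ p hq1.ne'
  have hsub : ∫ x in (0:ℝ)..1, g x = (∫ x in (0:ℝ)..1, (1:ℝ)) - ∫ x in (0:ℝ)..1, f x := by
    simp only [hg]
    exact intervalIntegral.integral_sub intervalIntegrable_const
      (hfcont.intervalIntegrable _ _)
  rw [hsub]
  have hsplit : (∫ x in (0:ℝ)..a, f x) + ∫ x in a..(1:ℝ), f x = ∫ x in (0:ℝ)..1, f x :=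
    intervalIntegral.integral_add_adjacent_intervals
      (hfcont.intervalIntegrable _ _) (hfcont.intervalIntegrable _ _)
  rw [← hsplit]
  have h2 : ∫ x in a..(1:ℝ), f x = 0 := by
    rw [show (0:ℝ) = ∫ x in a..(1:ℝ), (0:ℝ) by simp]
    apply intervalIntegral.integral_congr
    intro x hx
    rw [uIcc_of_le ha1] at hx
    have hax : a ≤ x := hx.1
    have : (p - x * q1) / q2 ≤ 0 := by
      apply div_nonpos_of_nonpos_of_nonneg _ hq2.le
      nlinarith
    simp only [hf]
    exact max_eq_left this
  have h1 : ∫ x in (0:ℝ)..a, f x = ∫ x in (0:ℝ)..a, (p - x * q1) / q2 := by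
    apply intervalIntegral.integral_congr
    intro x hx
    rw [uIcc_of_le ha0] at hx
    obtain ⟨hx0, hxa⟩ := hx
    have : 0 ≤ (p - x * q1) / q2 := by
      apply div_nonneg _ hq2.le
      nlinarith
    simp only [hf]
    exact max_eq_right this
  have h3 : ∫ x in (0:ℝ)..a, (p - x * q1) / q2 = (∫ x in (0:ℝ)..a, (p - x * q1)) / q2 :=
    intervalIntegral.integral_div _ _
  have h4 : ∫ x in (0:ℝ)..a, (p - x * q1) = a * p - (a ^ 2 / 2) * q1 := by
    rw [intervalIntegral.integral_sub intervalIntegrable_const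
      (intervalIntegral.intervalIntegrable_id.mul_const q1)]
    rw [intervalIntegral.integral_mul_const, integral_id, intervalIntegral.integral_const]
    simp [smul_eq_mul]
  rw [h1, h2, h3, h4, intervalIntegral.integral_const]
  have hq1' : q1 ≠ 0 := hq1.ne'
  have hq2' : q2 ≠ 0 := hq2.ne'
  simp only [ha, smul_eq_mul]
  field_simp
  ring
end

section
/- (Bundle demand, Case 2) Let q1, q2 > 0 and let (θ1, θ2) be uniformly distributed on the unit square [0, 1]². Then for every bundle subscription fee p with q2 ≤ p ≤ q1, the probability that θ1·q1 + θ2·q2 ≥ p equals (1/2)·((1 − p/q1) + (1 − (p − q2)/q1)) = 1 − p/q1 + q2/(2·q1). -/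
open Real Set MeasureTheory

/-!
Slice the region along `θ2 = y`: the admissible `θ1` form the interval `[(p - y q2) / q1, 1]`,
which lies inside `[0, 1]` exactly because `q2 ≤ p ≤ q1`. Its length `1 - (p - y q2) / q1` is
affine in `y`, so by Fubini the area is the mean of its values at `y = 0` and `y = 1`.
-/

def bundleSubscribers (q1 q2 p : ℝ) : Set (ℝ × ℝ) :=
  {θ | θ.1 ∈ Icc 0 1 ∧ θ.2 ∈ Icc 0 1 ∧ p ≤ θ.1 * q1 + θ.2 * q2}

lemma measurableSet_bundleSubscribers (q1 q2 p : ℝ) : MeasurableSet (bundleSubscribers q1 q2 p) :=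
  (measurable_fst measurableSet_Icc).inter <| (measurable_snd measurableSet_Icc).inter <|
    measurableSet_le measurable_const
      ((measurable_fst.mul_const q1).add (measurable_snd.mul_const q2))

lemma volume_setOf_mem_Icc_and_le_mul {q c : ℝ} (hq : 0 < q) (hc : 0 ≤ c) :
    volume {x : ℝ | x ∈ Icc 0 1 ∧ c ≤ x * q} = ENNReal.ofReal (1 - c / q) := by
  have : {x : ℝ | x ∈ Icc 0 1 ∧ c ≤ x * q} = Icc (c / q) 1 := by
    ext x
    simp only [mem_ofPred_eq, mem_Icc, div_le_iff₀ hq]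
    constructor
    · rintro ⟨⟨-, hx1⟩, hcx⟩; exact ⟨hcx, hx1⟩
    · rintro ⟨hcx, hx1⟩; exact ⟨⟨by nlinarith, hx1⟩, hcx⟩
  rw [this, Real.volume_Icc]

lemma volume_bundleSubscribers_slice {q1 q2 p : ℝ} (hq1 : 0 < q1) (hq2 : 0 < q2) (hp2 : q2 ≤ p)
    (y : ℝ) :
    volume ((·, y) ⁻¹' bundleSubscribers q1 q2 p) =
      (Icc 0 1).indicator (fun y ↦ ENNReal.ofReal (1 - (p - y * q2) / q1)) y := by
  by_cases hy : y ∈ Icc 0 1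
  · rw [indicator_of_mem hy, ← volume_setOf_mem_Icc_and_le_mul hq1 (by nlinarith [hy.2])]
    congr 1
    ext x
    simp only [bundleSubscribers, mem_preimage, mem_ofPred_eq, hy, true_and, sub_le_iff_le_add]
  · rw [indicator_of_notMem hy, measure_eq_zero_iff_ae_notMem]
    exact Filter.Eventually.of_forall fun x hx ↦ hy hx.2.1

lemma integral_const_add_mul_zero_one (a b : ℝ) :
    ∫ y in (0 : ℝ)..1, (a + b * y) = a + b / 2 := by
  rw [intervalIntegral.integral_add intervalIntegrable_const
    ((continuous_const_mul b).intervalIntegrable _ _), intervalIntegral.integral_const_mul]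
  simp only [intervalIntegral.integral_const, integral_id, smul_eq_mul]
  ring

lemma volume_bundleSubscribers {q1 q2 p : ℝ} (hq1 : 0 < q1) (hq2 : 0 < q2) (hp2 : q2 ≤ p)
    (hp1 : p ≤ q1) :
    volume (bundleSubscribers q1 q2 p) = ENNReal.ofReal (1 - p / q1 + q2 / (2 * q1)) := by
  have hlength_affine : ∀ y, 1 - (p - y * q2) / q1 = (1 - p / q1) + q2 / q1 * y := fun y ↦ by
    field_simp; ring
  have hnonneg : ∀ y ∈ Icc (0 : ℝ) 1, 0 ≤ 1 - (p - y * q2) / q1 := fun y hy ↦ by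
    rw [sub_nonneg, div_le_one hq1]; nlinarith [hy.1]
  rw [Measure.volume_eq_prod, Measure.prod_apply_symm (measurableSet_bundleSubscribers q1 q2 p)]
  simp_rw [volume_bundleSubscribers_slice hq1 hq2 hp2]
  rw [lintegral_indicator measurableSet_Icc, ← ofReal_integral_eq_lintegral_ofReal,
    integral_Icc_eq_integral_Ioc, ← intervalIntegral.integral_of_le zero_le_one]
  · simp_rw [hlength_affine, integral_const_add_mul_zero_one]
    ring_nf
  · exact (by fun_prop : Continuous fun y : ℝ ↦ 1 - (p - y * q2) / q1).integrableOn_Icc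
  · exact (ae_restrict_iff' measurableSet_Icc).2 (Filter.Eventually.of_forall hnonneg)

/-- Bundle demand, Case 2: Let `q1, q2 > 0` and let `(θ1, θ2)` be
uniformly distributed on `[0, 1]²`. For every bundle fee `p` with `q2 ≤ p ≤ q1`,
the probability that `θ1 * q1 + θ2 * q2 ≥ p` equals
`(1/2) * ((1 - p / q1) + (1 - (p - q2) / q1)) = 1 - p / q1 + q2 / (2 * q1)`. -/
theorem bundle_demand_case2 (q1 q2 p : ℝ) (hq1 : 0 < q1) (hq2 : 0 < q2)
    (hp2 : q2 ≤ p) (hp1 : p ≤ q1) :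
    MeasureTheory.volume
        {θ : ℝ × ℝ | θ.1 ∈ Set.Icc (0 : ℝ) 1 ∧ θ.2 ∈ Set.Icc (0 : ℝ) 1 ∧
          p ≤ θ.1 * q1 + θ.2 * q2}
      = ENNReal.ofReal ((1 / 2) * ((1 - p / q1) + (1 - (p - q2) / q1))) ∧
    (1 / 2 : ℝ) * ((1 - p / q1) + (1 - (p - q2) / q1)) = 1 - p / q1 + q2 / (2 * q1) := by
  have hformula : (1 / 2 : ℝ) * ((1 - p / q1) + (1 - (p - q2) / q1)) =
      1 - p / q1 + q2 / (2 * q1) := by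
    field_simp; ring
  rw [hformula]
  exact ⟨volume_bundleSubscribers hq1 hq2 hp2 hp1, rfl⟩
end

section
/- (Bundle demand, Case 3) Let q1, q2 > 0 and let (θ1, θ2) be uniformly distributed on the unit square [0, 1]². Then for every bundle subscription fee p with q1 ≤ p ≤ q2, the probability that θ1·q1 + θ2·q2 ≥ p equals (1/2)·((1 − p/q2) + (1 − (p − q1)/q2)) = 1 − p/q2 + q1/(2·q2). -/
open Real Set MeasureTheory

/-! For `q1 ≤ p ≤ q2` the line `θ1 * q1 + θ2 * q2 = p` crosses both vertical sides of the unit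
square, so the demand region lies between the graph of `θ1 ↦ (p - θ1 * q1) / q2` and the top
side, and its area is `∫₀¹ (1 - (p - x * q1) / q2) dx`. Boundary graphs do not change the area,
since closed and open vertical slices have the same length. -/

section RegionBetween

variable {α : Type*} [MeasurableSpace α] {μ : Measure α} {f g : α → ℝ} {s : Set α}

theorem volume_region_between_cc_eq_volume_regionBetween [SFinite μ] (hf : Measurable f)
    (hg : Measurable g) (hs : MeasurableSet s) :
    μ.prod volume {p : α × ℝ | p.1 ∈ s ∧ p.2 ∈ Icc (f p.1) (g p.1)} =
      μ.prod volume (regionBetween f g s) := by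
  rw [Measure.prod_apply (measurableSet_region_between_cc hf hg hs),
    Measure.prod_apply (measurableSet_regionBetween hf hg hs)]
  refine lintegral_congr fun x => ?_
  by_cases hx : x ∈ s
  · simp only [regionBetween, preimage, mem_ofPred_eq, hx, true_and]
    exact Real.volume_Icc.trans Real.volume_Ioo.symm
  · simp [regionBetween, hx]

theorem volume_region_between_cc_eq_integral [SigmaFinite μ] (hf : Measurable f)
    (hg : Measurable g) (f_int : IntegrableOn f s μ) (g_int : IntegrableOn g s μ)
    (hs : MeasurableSet s) (hfg : ∀ x ∈ s, f x ≤ g x) :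
    μ.prod volume {p : α × ℝ | p.1 ∈ s ∧ p.2 ∈ Icc (f p.1) (g p.1)} =
      ENNReal.ofReal (∫ y in s, (g - f) y ∂μ) := by
  rw [volume_region_between_cc_eq_volume_regionBetween hf hg hs,
    volume_regionBetween_eq_integral f_int g_int hs hfg]

end RegionBetween

theorem integral_Icc_zero_one_one_sub_affine (p q1 q2 : ℝ) :
    ∫ x in Icc (0 : ℝ) 1, (1 - (p - x * q1) / q2) = 1 - p / q2 + q1 / (2 * q2) := by
  rw [integral_Icc_eq_integral_Ioc, ← intervalIntegral.integral_of_le zero_le_one,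
    intervalIntegral.integral_sub, intervalIntegral.integral_div, intervalIntegral.integral_sub,
    intervalIntegral.integral_mul_const]
  · simp only [intervalIntegral.integral_const, integral_id]
    ring
  all_goals exact Continuous.intervalIntegrable (by fun_prop) 0 1

theorem unit_square_le_linear_eq_region_between_cc {q1 q2 p : ℝ} (hq1 : 0 ≤ q1) (hq2 : 0 < q2)
    (hp1 : q1 ≤ p) :
    {θ : ℝ × ℝ | θ.1 ∈ Icc (0 : ℝ) 1 ∧ θ.2 ∈ Icc (0 : ℝ) 1 ∧ p ≤ θ.1 * q1 + θ.2 * q2} =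
      {θ : ℝ × ℝ | θ.1 ∈ Icc (0 : ℝ) 1 ∧ θ.2 ∈ Icc ((p - θ.1 * q1) / q2) 1} := by
  ext ⟨x, y⟩
  simp only [mem_ofPred_eq, mem_Icc, div_le_iff₀ hq2]
  constructor
  · rintro ⟨hx, ⟨-, hy1⟩, hpy⟩
    exact ⟨hx, by linarith, hy1⟩
  · rintro ⟨⟨hx0, hx1⟩, hpy, hy1⟩
    have : x * q1 ≤ q1 := mul_le_of_le_one_left hq1 hx1
    exact ⟨⟨hx0, hx1⟩, ⟨by nlinarith, hy1⟩, by linarith⟩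

/-- Bundle demand, Case 3: Let `q1, q2 > 0` and let `(θ1, θ2)` be
uniformly distributed on `[0, 1]²`. For every bundle fee `p` with `q1 ≤ p ≤ q2`,
the probability that `θ1 * q1 + θ2 * q2 ≥ p` equals
`(1/2) * ((1 - p / q2) + (1 - (p - q1) / q2)) = 1 - p / q2 + q1 / (2 * q2)`. -/
theorem bundle_demand_case3 (q1 q2 p : ℝ) (hq1 : 0 < q1) (hq2 : 0 < q2)
    (hp1 : q1 ≤ p) (hp2 : p ≤ q2) :
    MeasureTheory.volume
        {θ : ℝ × ℝ | θ.1 ∈ Set.Icc (0 : ℝ) 1 ∧ θ.2 ∈ Set.Icc (0 : ℝ) 1 ∧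
          p ≤ θ.1 * q1 + θ.2 * q2}
      = ENNReal.ofReal ((1 / 2) * ((1 - p / q2) + (1 - (p - q1) / q2))) ∧
    (1 / 2 : ℝ) * ((1 - p / q2) + (1 - (p - q1) / q2)) = 1 - p / q2 + q1 / (2 * q2) := by
  have hclosed_form : (1 / 2 : ℝ) * ((1 - p / q2) + (1 - (p - q1) / q2)) = 1 - p / q2 + q1 / (2 * q2) := by
    field_simp
    ring
  refine ⟨?_, hclosed_form⟩
  have hcut_le_one : ∀ x ∈ Icc (0 : ℝ) 1, (p - x * q1) / q2 ≤ 1 := fun x hx => by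
    rw [div_le_one hq2]
    nlinarith [hx.1]
  rw [hclosed_form, unit_square_le_linear_eq_region_between_cc hq1.le hq2 hp1, Measure.volume_eq_prod,
    volume_region_between_cc_eq_integral (g := fun _ => 1) (by fun_prop) measurable_const
      (Continuous.integrableOn_Icc (by fun_prop)) (integrableOn_const (by simp))
      measurableSet_Icc hcut_le_one, ← integral_Icc_zero_one_one_sub_affine]
  rfl
end

section
/- (Bundle demand, Case 4) Let q1, q2 > 0 and let (θ1, θ2) be uniformly distributed on the unit square [0, 1]². Then for every bundle subscription fee p with max(q1, q2) ≤ p ≤ q1 + q2, the probability that θ1·q1 + θ2·q2 ≥ p equals (1/2)·(1 − (p − q1)/q2)·(1 − (p − q2)/q1) = (q1 + q2 − p)²/(2·q1·q2). -/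
open Real Set MeasureTheory

lemma bundle_demand_aux (q1 q2 p : ℝ) (hq1 : 0 < q1) (hq2 : 0 < q2) :
    (1 / 2 : ℝ) * (1 - (p - q1) / q2) * (1 - (p - q2) / q1)
      = (q1 + q2 - p) ^ 2 / (2 * q1 * q2) := by
  rw [eq_div_iff (by positivity : (2*q1*q2 : ℝ) ≠ 0)]
  field_simp
  ring

/-- Bundle demand, Case 4: Let `q1, q2 > 0` and let `(θ1, θ2)` be
uniformly distributed on `[0, 1]²`. For every bundle fee `p` with
`max q1 q2 ≤ p ≤ q1 + q2`, the probability that `θ1 * q1 + θ2 * q2 ≥ p` equals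
`(1/2) * (1 - (p - q1) / q2) * (1 - (p - q2) / q1) = (q1 + q2 - p) ^ 2 / (2 * q1 * q2)`. -/
theorem bundle_demand_case4 (q1 q2 p : ℝ) (hq1 : 0 < q1) (hq2 : 0 < q2)
    (hpmax : max q1 q2 ≤ p) (hpsum : p ≤ q1 + q2) :
    MeasureTheory.volume
        {θ : ℝ × ℝ | θ.1 ∈ Set.Icc (0 : ℝ) 1 ∧ θ.2 ∈ Set.Icc (0 : ℝ) 1 ∧
          p ≤ θ.1 * q1 + θ.2 * q2}
      = ENNReal.ofReal ((1 / 2) * (1 - (p - q1) / q2) * (1 - (p - q2) / q1)) ∧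
    (1 / 2 : ℝ) * (1 - (p - q1) / q2) * (1 - (p - q2) / q1)
      = (q1 + q2 - p) ^ 2 / (2 * q1 * q2) := by
  have hq1p : q1 ≤ p := le_trans (le_max_left _ _) hpmax
  have hq2p : q2 ≤ p := le_trans (le_max_right _ _) hpmax
  set S : Set (ℝ × ℝ) := {θ : ℝ × ℝ | θ.1 ∈ Set.Icc (0 : ℝ) 1 ∧ θ.2 ∈ Set.Icc (0 : ℝ) 1 ∧
          p ≤ θ.1 * q1 + θ.2 * q2} with hSdef
  set a : ℝ := (p - q2) / q1 with ha
  have ha0 : 0 ≤ a := div_nonneg (by linarith) hq1.le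
  have ha1 : a ≤ 1 := by rw [ha, div_le_one hq1]; linarith
  have haq : a * q1 = p - q2 := div_mul_cancel₀ _ hq1.ne'
  set f : ℝ → ℝ := fun x => (p - x * q1) / q2 with hf
  have hfC : Continuous f := by
    apply Continuous.div_const
    exact continuous_const.sub (continuous_id.mul continuous_const)
  have hcont : Continuous fun x => max (1 - f x) 0 :=
    (continuous_const.sub hfC).max continuous_const
  have hmeas : MeasurableSet S := by
    apply MeasurableSet.inter
    · exact measurable_fst measurableSet_Icc
    apply MeasurableSet.inter
    · exact measurable_snd measurableSet_Icc
    · exact measurableSet_le measurable_const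
        ((measurable_fst.mul_const q1).add (measurable_snd.mul_const q2))
  have hslice : ∀ x ∈ Icc (0:ℝ) 1, Prod.mk x ⁻¹' S = Icc (f x) 1 := by
    intro x hx
    ext y
    simp only [hSdef, mem_preimage, mem_setOf_eq, mem_Icc]
    constructor
    · rintro ⟨_, ⟨hy0, hy1⟩, hp⟩
      refine ⟨?_, hy1⟩
      rw [hf, div_le_iff₀ hq2]; linarith
    · rintro ⟨hfy, hy1⟩
      have hfx0 : 0 ≤ f x := by
        apply div_nonneg _ hq2.le
        nlinarith [hx.1, hx.2]
      have hle : p - x * q1 ≤ y * q2 := by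
        have := (div_le_iff₀ hq2).mp hfy
        linarith
      exact ⟨⟨hx.1, hx.2⟩, ⟨le_trans hfx0 hfy, hy1⟩, by linarith⟩
  have hvol : volume S = ∫⁻ x in Icc (0:ℝ) 1, ENNReal.ofReal (1 - f x) := by
    rw [MeasureTheory.Measure.volume_eq_prod, MeasureTheory.Measure.prod_apply hmeas,
      ← MeasureTheory.lintegral_indicator measurableSet_Icc]
    congr 1
    ext x
    by_cases hx : x ∈ Icc (0:ℝ) 1
    · rw [Set.indicator_of_mem hx, hslice x hx, Real.volume_Icc]
    · rw [Set.indicator_of_notMem hx]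
      have he : Prod.mk x ⁻¹' S = ∅ := by
        ext y
        simp only [hSdef, mem_preimage, mem_setOf_eq, mem_empty_iff_false, iff_false]
        rintro ⟨h1, _, _⟩; exact hx h1
      rw [he]; simp
  have hofReal : ∀ x : ℝ, ENNReal.ofReal (1 - f x) = ENNReal.ofReal (max (1 - f x) 0) := by
    intro x
    rcases le_total 0 (1 - f x) with h | h
    · rw [max_eq_left h]
    · rw [max_eq_right h, ENNReal.ofReal_of_nonpos h, ENNReal.ofReal_zero]
  have hlint : volume S = ENNReal.ofReal (∫ x in Icc (0:ℝ) 1, max (1 - f x) 0) := by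
    rw [hvol]
    simp_rw [hofReal]
    rw [← MeasureTheory.ofReal_integral_eq_lintegral_ofReal
      (hcont.integrableOn_Icc)
      (Filter.Eventually.of_forall fun x => le_max_right _ _)]
  have hInt : ∫ x in Icc (0:ℝ) 1, max (1 - f x) 0
      = (1 / 2) * (1 - (p - q1) / q2) * (1 - (p - q2) / q1) := by
    rw [MeasureTheory.integral_Icc_eq_integral_Ioc,
      ← intervalIntegral.integral_of_le (by norm_num : (0:ℝ) ≤ 1),
      ← intervalIntegral.integral_add_adjacent_intervals (a := 0) (b := a) (c := 1)
        (hcont.intervalIntegrable _ _) (hcont.intervalIntegrable _ _)]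
    have h1 : ∫ x in (0:ℝ)..a, max (1 - f x) 0 = 0 := by
      rw [intervalIntegral.integral_congr (g := fun _ => (0:ℝ)) ?_,
        intervalIntegral.integral_zero]
      intro x hx
      rw [Set.uIcc_of_le ha0] at hx
      have hxq : x * q1 ≤ p - q2 := by
        have := hx.2
        nlinarith
      have h1f : 1 ≤ f x := by
        rw [hf, le_div_iff₀ hq2]; linarith
      exact max_eq_right (by linarith)
    have h2 : ∫ x in a..(1:ℝ), max (1 - f x) 0
        = ∫ x in a..(1:ℝ), ((q2 - p) / q2 + (q1 / q2) * x) := by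
      apply intervalIntegral.integral_congr
      intro x hx
      rw [Set.uIcc_of_le ha1] at hx
      have hxq : p - q2 ≤ x * q1 := by nlinarith [hx.1]
      have hfle : f x ≤ 1 := by
        rw [hf, div_le_one hq2]; linarith
      show (1 - f x) ⊔ 0 = (q2 - p) / q2 + q1 / q2 * x
      rw [max_eq_left (by linarith : (0:ℝ) ≤ 1 - f x), hf]
      field_simp
      ring
    have h3 : ∫ x in a..(1:ℝ), ((q2 - p) / q2 + (q1 / q2) * x)
        = (q2 - p) / q2 * (1 - a) + (q1 / q2) * ((1 ^ 2 - a ^ 2) / 2) := by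
      have hii : IntervalIntegrable (fun x : ℝ => q1 / q2 * x) volume a 1 :=
        (by continuity : Continuous fun x : ℝ => q1 / q2 * x).intervalIntegrable _ _
      rw [intervalIntegral.integral_add intervalIntegrable_const hii,
        intervalIntegral.integral_const, intervalIntegral.integral_const_mul,
        integral_id, smul_eq_mul]
      ring
    rw [h1, h2, h3, ha]
    field_simp [hq1.ne', hq2.ne']
    ring
  refine ⟨?_, bundle_demand_aux q1 q2 p hq1 hq2⟩
  rw [hlint, hInt]
end
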